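/- Fix 0 < α < 1 and set a_k = ∏_{i=1}^{k} (1 − (i+1)^{−α}) for k ≥ 1. Then the compact set E = {0, 1, a_1, a_2, …} ⊂ ℝ satisfies dim_qA E = 0 (equivalently, h_E(δ) = 0 for every δ ∈ (0,1)). -/
import Mathlib


open Filter Topology Metric Set

/-- `coverNum X r R` : the smallest number of closed balls of radius `r` needed to cover
`X ∩ B` over all closed balls `B` of radius `R`. -/
noncomputable def coverNum (X : Type*) [MetricSpace X] (r R : ℝ) : ℕ :=
  sSup {n : ℕ | ∃ x : X, n = sInf {m : ℕ | ∃ s : Finset X,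
    s.card = m ∧ Metric.closedBall x R ⊆ ⋃ y ∈ s, Metric.closedBall y r}}

/-- `hFun X δ = inf {α ≥ 0 : ∃ b, c > 0, N_{r,R}(X) ≤ c (R/r)^α for all 0 < r < r^(1-δ) ≤ R < b}`. -/
noncomputable def hFun (X : Type*) [MetricSpace X] (δ : ℝ) : ℝ :=
  sInf {α : ℝ | 0 ≤ α ∧ ∃ b c : ℝ, 0 < b ∧ 0 < c ∧ ∀ r R : ℝ,
    0 < r → r < r ^ (1 - δ) → r ^ (1 - δ) ≤ R → R < b →
      (coverNum X r R : ℝ) ≤ c * (R / r) ^ α}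

/-- The quasi-Assouad dimension `dim_qA X = lim_{δ → 0⁺} h_X(δ)`; since `h_X` is
non-increasing in `δ`, this limit equals the supremum over `δ ∈ (0,1)`. -/
noncomputable def dimqA (X : Type*) [MetricSpace X] : ℝ :=
  sSup (hFun X '' Set.Ioo 0 1)

/-- `a_k = ∏_{i=1}^k (1 - (i+1)^(-α))`; note `a_0 = 1` (empty product). -/
noncomputable def aSeq (α : ℝ) (k : ℕ) : ℝ :=
  ∏ i ∈ Finset.Icc 1 k, (1 - ((i : ℝ) + 1) ^ (-α))

/-- The countable compact set `E = {0, 1, a_1, a_2, …}`. -/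
noncomputable def aSet (α : ℝ) : Set ℝ :=
  insert (0 : ℝ) (insert 1 {x : ℝ | ∃ k : ℕ, 1 ≤ k ∧ x = aSeq α k})

section Aux
variable {α : ℝ}


lemma factor_pos (hα0 : 0 < α) {i : ℕ} (hi : 1 ≤ i) :
    0 < 1 - ((i : ℝ) + 1) ^ (-α) := by
  have h1 : (1 : ℝ) < (i : ℝ) + 1 := by
    have : (1:ℝ) ≤ (i:ℝ) := by exact_mod_cast hi
    linarith
  have := Real.rpow_lt_one_of_one_lt_of_neg h1 (neg_neg_of_pos hα0)
  linarith

lemma factor_lt_one (hα0 : 0 < α) {i : ℕ} :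
    1 - ((i : ℝ) + 1) ^ (-α) ≤ 1 := by
  have : (0:ℝ) < ((i : ℝ) + 1) ^ (-α) := Real.rpow_pos_of_pos (by positivity) _
  linarith

lemma aSeq_pos (hα0 : 0 < α) (k : ℕ) : 0 < aSeq α k := by
  apply Finset.prod_pos
  intro i hi
  exact factor_pos hα0 (Finset.mem_Icc.mp hi).1

lemma aSeq_antitone (hα0 : 0 < α) : Antitone (aSeq α) := by
  apply antitone_nat_of_succ_le
  intro n
  have h : aSeq α (n + 1) = aSeq α n * (1 - (((n + 1 : ℕ) : ℝ) + 1) ^ (-α)) :=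
    Finset.prod_Icc_succ_top (by omega) _
  rw [h]
  exact mul_le_of_le_one_right (aSeq_pos hα0 n).le (factor_lt_one hα0)

lemma rpow_neg_anti (hα0 : 0 < α) {x y : ℝ} (hx : 0 < x) (hxy : x ≤ y) :
    y ^ (-α) ≤ x ^ (-α) := by
  rw [Real.rpow_neg hx.le, Real.rpow_neg (hx.trans_le hxy).le]
  exact inv_anti₀ (Real.rpow_pos_of_pos hx _) (Real.rpow_le_rpow hx.le hxy hα0.le)

lemma aSeq_le_exp (hα0 : 0 < α) (k : ℕ) :
    aSeq α k ≤ Real.exp (-(k : ℝ) * ((k : ℝ) + 1) ^ (-α)) := by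
  have h1 : aSeq α k ≤ ∏ i ∈ Finset.Icc 1 k, Real.exp (-(((i : ℝ) + 1) ^ (-α))) := by
    apply Finset.prod_le_prod
    · intro i hi; exact (factor_pos hα0 (Finset.mem_Icc.mp hi).1).le
    · intro i hi
      have := Real.add_one_le_exp (-(((i : ℝ) + 1) ^ (-α)))
      linarith
  have h2 : ∏ i ∈ Finset.Icc 1 k, Real.exp (-(((i : ℝ) + 1) ^ (-α)))
      = Real.exp (∑ i ∈ Finset.Icc 1 k, -(((i : ℝ) + 1) ^ (-α))) := (Real.exp_sum _ _).symm
  have h3 : ∑ i ∈ Finset.Icc 1 k, -(((i : ℝ) + 1) ^ (-α)) ≤ -(k : ℝ) * ((k : ℝ) + 1) ^ (-α) := by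
    rw [Finset.sum_neg_distrib, neg_mul, neg_le_neg_iff]
    have : ∑ i ∈ Finset.Icc 1 k, ((k : ℝ) + 1) ^ (-α) ≤
        ∑ i ∈ Finset.Icc 1 k, (((i : ℝ) + 1) ^ (-α)) := by
      apply Finset.sum_le_sum
      intro i hi
      have hik : (i : ℝ) + 1 ≤ (k : ℝ) + 1 := by
        have := (Finset.mem_Icc.mp hi).2
        have : (i:ℝ) ≤ (k:ℝ) := by exact_mod_cast this
        linarith
      exact rpow_neg_anti hα0 (by positivity) hik
    calc (k : ℝ) * ((k : ℝ) + 1) ^ (-α)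
        = ∑ _i ∈ Finset.Icc 1 k, ((k : ℝ) + 1) ^ (-α) := by
          rw [Finset.sum_const, Nat.card_Icc]
          simp [nsmul_eq_mul]
      _ ≤ _ := this
  calc aSeq α k ≤ _ := h1
    _ = _ := h2
    _ ≤ _ := Real.exp_le_exp.mpr h3


lemma eventually_poly_le_exp {p c : ℝ} (hp : 0 < p) (hc : 0 < c) :
    ∀ᶠ L in atTop, (2 * L) ^ p + 3 ≤ Real.exp (c * L) := by
  have h1 : Tendsto (fun L : ℝ => Real.exp (c * L) / (c * L) ^ p) atTop atTop :=
    (tendsto_exp_div_rpow_atTop p).comp (Tendsto.const_mul_atTop hc tendsto_id)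
  filter_upwards [h1.eventually_ge_atTop ((2 / c) ^ p + 3), eventually_ge_atTop (1 / c),
    eventually_gt_atTop (0 : ℝ)] with L h2 h3 hL0
  have hcL : (1 : ℝ) ≤ c * L := by
    rw [div_le_iff₀ hc] at h3
    nlinarith
  have hcLpos : (0 : ℝ) < c * L := by linarith
  have hcLp1 : (1 : ℝ) ≤ (c * L) ^ p := Real.one_le_rpow hcL hp.le
  have hcLppos : (0 : ℝ) < (c * L) ^ p := by linarith
  have h4 : ((2 / c) ^ p + 3) * (c * L) ^ p ≤ Real.exp (c * L) := by
    rw [← le_div_iff₀ hcLppos]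
    exact h2
  have h5 : (2 * L : ℝ) ^ p = (2 / c) ^ p * (c * L) ^ p := by
    rw [← Real.mul_rpow (by positivity) (by positivity)]
    congr 1
    field_simp
  nlinarith [Real.rpow_nonneg (show (0:ℝ) ≤ 2 / c by positivity) p]





lemma aSeq_zero : aSeq α 0 = 1 := by simp [aSeq]

lemma zero_mem_aSet : (0 : ℝ) ∈ aSet α := Set.mem_insert _ _

lemma aSeq_mem_aSet (k : ℕ) : aSeq α k ∈ aSet α := by
  cases k with
  | zero => rw [aSeq_zero]; exact Set.mem_insert_iff.mpr (Or.inr (Set.mem_insert _ _))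
  | succ m =>
    exact Set.mem_insert_iff.mpr (Or.inr (Set.mem_insert_iff.mpr (Or.inr
      ⟨m + 1, by omega, rfl⟩)))

noncomputable def gSeq (α : ℝ) : ℕ → ↥(aSet α)
  | 0 => ⟨0, zero_mem_aSet⟩
  | (k + 1) => ⟨aSeq α k, aSeq_mem_aSet k⟩

lemma coverNum_le_of_aSeq_le (hα0 : 0 < α) {r : ℝ} (R : ℝ) (hr : 0 < r) (K : ℕ)
    (hK : aSeq α K ≤ r) : coverNum (aSet α) r R ≤ K + 2 := by
  have hcover : ∀ x : ↥(aSet α), Metric.closedBall x R ⊆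
      ⋃ y ∈ (Finset.range (K + 2)).image (gSeq α), Metric.closedBall y r := by
    intro x z _
    have hz : (z : ℝ) ∈ insert (0 : ℝ) (insert 1 {x : ℝ | ∃ k : ℕ, 1 ≤ k ∧ x = aSeq α k}) :=
      z.property
    rw [Set.mem_insert_iff, Set.mem_insert_iff] at hz
    have key : ∃ n ∈ Finset.range (K + 2), dist z (gSeq α n) ≤ r := by
      rcases hz with h0 | h1 | ⟨k, hk1, hk⟩
      · exact ⟨0, by simp, by rw [Subtype.dist_eq, h0]; simp [gSeq]; positivity⟩
      · refine ⟨1, by simp, ?_⟩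
        rw [Subtype.dist_eq, h1]
        simp only [gSeq, aSeq_zero]
        simp; positivity
      · by_cases hkK : k ≤ K
        · refine ⟨k + 1, by simp; omega, ?_⟩
          rw [Subtype.dist_eq, hk]
          simp only [gSeq]
          simp; positivity
        · refine ⟨0, by simp, ?_⟩
          rw [Subtype.dist_eq, hk]
          simp only [gSeq]
          rw [Real.dist_eq, sub_zero, abs_of_pos (aSeq_pos hα0 k)]
          exact le_trans (aSeq_antitone hα0 (by omega : K ≤ k)) hK
    obtain ⟨n, hn, hd⟩ := key
    exact Set.mem_iUnion₂.mpr ⟨gSeq α n, Finset.mem_image_of_mem _ hn,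
      Metric.mem_closedBall.mpr hd⟩
  apply csSup_le
  · exact ⟨_, ⟨⟨0, zero_mem_aSet⟩, rfl⟩⟩
  · rintro n ⟨x, rfl⟩
    have hmem : ((Finset.range (K + 2)).image (gSeq α)).card ∈
        {m : ℕ | ∃ s : Finset ↥(aSet α), s.card = m ∧
          Metric.closedBall x R ⊆ ⋃ y ∈ s, Metric.closedBall y r} :=
      ⟨_, rfl, hcover x⟩
    exact le_trans (Nat.sInf_le hmem) (le_trans Finset.card_image_le (by simp))




lemma mem_hSet (hα0 : 0 < α) (hα1 : α < 1) {δ : ℝ} (hδ : δ ∈ Set.Ioo (0:ℝ) 1)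
    {ε : ℝ} (hε : 0 < ε) :
    ε ∈ {β : ℝ | 0 ≤ β ∧ ∃ b c : ℝ, 0 < b ∧ 0 < c ∧ ∀ r R : ℝ,
      0 < r → r < r ^ (1 - δ) → r ^ (1 - δ) ≤ R → R < b →
        (coverNum (aSet α) r R : ℝ) ≤ c * (R / r) ^ β} := by
  simp only [Set.mem_setOf_eq]
  have hp : (0 : ℝ) < (1 - α)⁻¹ := by
    apply inv_pos.mpr; linarith
  have hc : (0 : ℝ) < δ * ε := mul_pos hδ.1 hε
  obtain ⟨L0, hL0⟩ := (eventually_poly_le_exp hp hc).exists_forall_of_atTop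
  set L1 := max L0 1 with hL1def
  refine ⟨hε.le, Real.exp (-L1), 1, Real.exp_pos _, one_pos, ?_⟩
  intro r R hr hrr hrR hRb
  -- r < 1
  have hr1 : r < 1 := by
    by_contra h
    push_neg at h
    have : r ^ (1 - δ) ≤ r ^ (1 : ℝ) := Real.rpow_le_rpow_of_exponent_le h (by linarith [hδ.1])
    rw [Real.rpow_one] at this
    linarith
  set L := -Real.log r with hLdef
  have hrb : r < Real.exp (-L1) := lt_of_lt_of_le hrr (le_trans hrR (le_of_lt hRb))
  have hLge : L1 ≤ L := by
    have := Real.log_lt_log hr hrb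
    rw [Real.log_exp] at this
    simp only [hLdef]
    linarith
  have hL1 : (1 : ℝ) ≤ L := le_trans (le_max_right _ _) hLge
  have hLpos : (0 : ℝ) < L := by linarith
  set p := (1 - α)⁻¹ with hpdef
  set T := (2 * L) ^ p with hTdef
  have hT1 : (1 : ℝ) ≤ T := Real.one_le_rpow (by linarith) hp.le
  set K := ⌈T⌉₊ with hKdef
  have hK1 : 1 ≤ K := Nat.one_le_ceil_iff.mpr (by linarith)
  have hK1R : (1 : ℝ) ≤ (K : ℝ) := by exact_mod_cast hK1
  have hKT : T ≤ (K : ℝ) := Nat.le_ceil _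
  -- a_K ≤ r
  have hstep : L ≤ (K : ℝ) * ((K : ℝ) + 1) ^ (-α) := by
    have h2K : (K : ℝ) + 1 ≤ 2 * K := by linarith
    have ha : (2 * (K : ℝ)) ^ (-α) ≤ ((K : ℝ) + 1) ^ (-α) :=
      rpow_neg_anti hα0 (by linarith) h2K
    have hb : (2 * (K : ℝ)) ^ (-α) = 2 ^ (-α) * (K : ℝ) ^ (-α) :=
      Real.mul_rpow (by norm_num) (by linarith)
    have hc2 : (K : ℝ) * (K : ℝ) ^ (-α) = (K : ℝ) ^ (1 - α) := by
      rw [show (1 : ℝ) - α = 1 + (-α) by ring, Real.rpow_add (by linarith) 1 (-α),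
        Real.rpow_one]
    have hd : T ^ (1 - α) = 2 * L := by
      rw [hTdef, hpdef]
      exact Real.rpow_inv_rpow (by linarith) (by linarith)
    have he : T ^ (1 - α) ≤ (K : ℝ) ^ (1 - α) :=
      Real.rpow_le_rpow (by linarith) hKT (by linarith)
    have hf : (1 : ℝ) ≤ 2 ^ (-α) * 2 := by
      have : (2 : ℝ) ^ (-α) * 2 = 2 ^ (1 - α) := by
        rw [show (1 : ℝ) - α = -α + 1 by ring, Real.rpow_add_one (by norm_num : (2:ℝ) ≠ 0)]
      rw [this]
      exact Real.one_le_rpow (by norm_num) (by linarith)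
    calc L = 1 * L := (one_mul L).symm
      _ ≤ (2 ^ (-α) * 2) * L := by
          apply mul_le_mul_of_nonneg_right hf hLpos.le
      _ = 2 ^ (-α) * (2 * L) := by ring
      _ ≤ 2 ^ (-α) * (K : ℝ) ^ (1 - α) := by
          apply mul_le_mul_of_nonneg_left (le_trans (le_of_eq hd.symm) he)
            (Real.rpow_nonneg (by norm_num) _)
      _ = (K : ℝ) * (2 ^ (-α) * (K : ℝ) ^ (-α)) := by rw [← hc2]; ring
      _ = (K : ℝ) * (2 * (K : ℝ)) ^ (-α) := by rw [hb]
      _ ≤ (K : ℝ) * ((K : ℝ) + 1) ^ (-α) := by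
          apply mul_le_mul_of_nonneg_left ha (by linarith)
  have haK : aSeq α K ≤ r := by
    calc aSeq α K ≤ Real.exp (-(K : ℝ) * ((K : ℝ) + 1) ^ (-α)) := aSeq_le_exp hα0 K
      _ ≤ Real.exp (-L) := Real.exp_le_exp.mpr (by linarith)
      _ = r := by rw [hLdef, neg_neg, Real.exp_log hr]
  have hcov := coverNum_le_of_aSeq_le hα0 R hr K haK
  -- (K+2 : ℝ) ≤ exp (δ*ε*L)
  have hKltT : (K : ℝ) < T + 1 := Nat.ceil_lt_add_one (by linarith)
  have hexp : (K : ℝ) + 2 ≤ Real.exp (δ * ε * L) := by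
    have h6 := hL0 L (le_trans (le_max_left _ _) hLge)
    have : (K : ℝ) + 2 < T + 3 := by linarith
    rw [hTdef] at this
    linarith
  have h1 : (coverNum (aSet α) r R : ℝ) ≤ (K : ℝ) + 2 := by
    exact_mod_cast hcov
  have hRr : r ^ (-δ) ≤ R / r := by
    rw [le_div_iff₀ hr]
    calc r ^ (-δ) * r = r ^ (1 - δ) := by
          rw [show (1 : ℝ) - δ = -δ + 1 by ring, Real.rpow_add_one hr.ne' (-δ)]
      _ ≤ R := hrR
  have h2 : Real.exp (δ * ε * L) = (r ^ (-δ)) ^ ε := by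
    rw [← Real.rpow_mul hr.le (-δ) ε, Real.rpow_def_of_pos hr]
    congr 1
    rw [hLdef]
    ring
  have h3 : (r ^ (-δ)) ^ ε ≤ (R / r) ^ ε :=
    Real.rpow_le_rpow (Real.rpow_nonneg hr.le _) hRr hε.le
  calc (coverNum (aSet α) r R : ℝ) ≤ (K : ℝ) + 2 := h1
    _ ≤ Real.exp (δ * ε * L) := hexp
    _ = (r ^ (-δ)) ^ ε := h2
    _ ≤ (R / r) ^ ε := h3
    _ = 1 * (R / r) ^ ε := (one_mul _).symm


lemma hFun_aSet_eq_zero (hα0 : 0 < α) (hα1 : α < 1) {δ : ℝ} (hδ : δ ∈ Set.Ioo (0:ℝ) 1) :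
    hFun (aSet α) δ = 0 := by
  unfold hFun
  set S := {β : ℝ | 0 ≤ β ∧ ∃ b c : ℝ, 0 < b ∧ 0 < c ∧ ∀ r R : ℝ,
    0 < r → r < r ^ (1 - δ) → r ^ (1 - δ) ≤ R → R < b →
      (coverNum (aSet α) r R : ℝ) ≤ c * (R / r) ^ β} with hSdef
  have hne : S.Nonempty := ⟨1, mem_hSet hα0 hα1 hδ one_pos⟩
  have hbdd : BddBelow S := ⟨0, fun a ha => ha.1⟩
  apply le_antisymm
  · apply le_of_forall_pos_le_add
    intro ε hε
    have := csInf_le hbdd (mem_hSet hα0 hα1 hδ hε)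
    linarith
  · exact le_csInf hne fun a ha => ha.1

end Aux

/-- For `0 < α < 1` and `a_k = ∏_{i=1}^k (1 - (i+1)^(-α))`, the compact set
`E = {0, 1, a_1, a_2, …}` satisfies `dim_qA E = 0`; equivalently `h_E(δ) = 0` for every
`δ ∈ (0,1)`. -/
theorem aSet_dimqA_eq_zero (α : ℝ) (hα0 : 0 < α) (hα1 : α < 1) :
    dimqA (aSet α) = 0 ∧ ∀ δ ∈ Set.Ioo (0 : ℝ) 1, hFun (aSet α) δ = 0 := by
  have hFun0 : ∀ δ ∈ Set.Ioo (0 : ℝ) 1, hFun (aSet α) δ = 0 := fun δ hδ =>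
    hFun_aSet_eq_zero hα0 hα1 hδ
  refine ⟨?_, hFun0⟩
  have himg : hFun (aSet α) '' Set.Ioo 0 1 = {0} := by
    apply Set.eq_singleton_iff_unique_mem.mpr
    constructor
    · exact ⟨1/2, by norm_num, hFun0 (1/2) (by norm_num)⟩
    · rintro y ⟨δ, hδ, rfl⟩
      exact hFun0 δ hδ
  rw [dimqA, himg, csSup_singleton]
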